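/- For any cut (S, S̄) of a heterogeneous graph G and any typed graphlet H of G, the weighted cut size in the induced graph G^H satisfies (1/|E(H)|) · cut_{G^H}(S, S̄) ≤ cut_G^H(S, S̄) ≤ cut_{G^H}(S, S̄), where cut_G^H counts the number of typed-graphlet instances crossing the cut and cut_{G^H} is the total weight of edges of G^H crossing the cut. -/
import Mathlib


open scoped Classical BigOperators

/-- A (typed-graphlet) instance: a finite set of vertices and edges. -/
structure Inst (V : Type*) where
  verts : Finset V
  edges : Finset (Sym2 V)

variable {V : Type*} [Fintype V] [DecidableEq V]

/-- Typed-graphlet edge weight: number of instances containing `e` as an edge. -/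
noncomputable def W (I : Finset (Inst V)) (e : Sym2 V) : ℕ :=
  (I.filter fun F => e ∈ F.edges).card

/-- Typed-graphlet degree of `v`. -/
noncomputable def degH (I : Finset (Inst V)) (v : V) : ℕ :=
  ∑ F ∈ I, (F.edges.filter fun e => v ∈ e).card

/-- Typed-graphlet volume of `S`. -/
noncomputable def volH (I : Finset (Inst V)) (S : Finset V) : ℕ :=
  ∑ v ∈ S, degH I v

/-- Weighted degree of `v` in the induced weighted graph `G^H`. -/
noncomputable def wdeg (I : Finset (Inst V)) (v : V) : ℕ :=
  ∑ e ∈ Finset.univ.filter (fun e : Sym2 V => v ∈ e), W I e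

/-- Weighted volume of `S` in `G^H`. -/
noncomputable def volW (I : Finset (Inst V)) (S : Finset V) : ℕ :=
  ∑ v ∈ S, wdeg I v

/-- An edge crosses the cut `(S, Sᶜ)`. -/
def cross (S : Finset V) (e : Sym2 V) : Prop :=
  (∃ x ∈ e, x ∈ S) ∧ (∃ x ∈ e, x ∉ S)

/-- Weighted cut size in `G^H`. -/
noncomputable def cutW (I : Finset (Inst V)) (S : Finset V) : ℕ :=
  ∑ e ∈ Finset.univ.filter (fun e : Sym2 V => cross S e), W I e

/-- An instance crosses the cut `(S, Sᶜ)`. -/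
def crossInst (S : Finset V) (F : Inst V) : Prop :=
  (∃ v ∈ F.verts, v ∈ S) ∧ (∃ v ∈ F.verts, v ∉ S)

/-- Typed-graphlet cut size: number of instances crossing the cut. -/
noncomputable def cutH (I : Finset (Inst V)) (S : Finset V) : ℕ :=
  (I.filter fun F => crossInst S F).card

/-- Connectedness of an instance (vertices nonempty, edges within vertex set,
every two vertices joined by a path of instance edges). -/
def connectedInst (F : Inst V) : Prop :=
  F.verts.Nonempty ∧ (∀ e ∈ F.edges, ∀ x ∈ e, x ∈ F.verts) ∧
    ∀ a ∈ F.verts, ∀ b ∈ F.verts,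
      Relation.ReflTransGen (fun x y => s(x, y) ∈ F.edges) a b

/-- Typed-graphlet conductance of the cut `(S, Sᶜ)`. -/
noncomputable def phiHcut (I : Finset (Inst V)) (S : Finset V) : ℝ :=
  (cutH I S : ℝ) / min (volH I S : ℝ) (volH I Sᶜ : ℝ)

/-- Ordinary weighted conductance of the cut `(S, Sᶜ)` in `G^H`. -/
noncomputable def phiWcut (I : Finset (Inst V)) (S : Finset V) : ℝ :=
  (cutW I S : ℝ) / min (volW I S : ℝ) (volW I Sᶜ : ℝ)

/-- Typed-graphlet conductance of `G`: minimum over all proper nonempty cuts. -/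
noncomputable def phiH (I : Finset (Inst V)) : ℝ :=
  sInf {q : ℝ | ∃ S : Finset V, S.Nonempty ∧ Sᶜ.Nonempty ∧ q = phiHcut I S}

/-- Ordinary conductance of the weighted graph `G^H`. -/
noncomputable def phiW (I : Finset (Inst V)) : ℝ :=
  sInf {q : ℝ | ∃ S : Finset V, S.Nonempty ∧ Sᶜ.Nonempty ∧ q = phiWcut I S}

lemma cross_of_path {S : Finset V} {R : V → V → Prop} {a b : V}
    (h : Relation.ReflTransGen R a b) (ha : a ∈ S) (hb : b ∉ S) :
    ∃ x y, R x y ∧ x ∈ S ∧ y ∉ S := by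
  induction h with
  | refl => exact absurd ha hb
  | @tail x y _ step ih =>
    by_cases hx : x ∈ S
    · exact ⟨x, y, step, hx, hb⟩
    · exact ih hx

lemma exists_cross_edge {F : Inst V} {S : Finset V}
    (hc : connectedInst F) (h : crossInst S F) :
    ∃ e ∈ F.edges, cross S e := by
  obtain ⟨⟨a, ha, haS⟩, ⟨b, hb, hbS⟩⟩ := h
  obtain ⟨x, y, step, hxS, hyS⟩ := cross_of_path (hc.2.2 a ha b hb) haS hbS
  exact ⟨s(x, y), step, ⟨x, by simp, hxS⟩, ⟨y, by simp, hyS⟩⟩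

lemma cutW_eq (I : Finset (Inst V)) (S : Finset V) :
    cutW I S = ∑ F ∈ I, (F.edges.filter fun e => cross S e).card := by
  unfold cutW W
  simp_rw [Finset.card_filter]
  rw [Finset.sum_comm]
  refine Finset.sum_congr rfl fun F _ => ?_
  calc (∑ e ∈ Finset.univ.filter (fun e : Sym2 V => cross S e),
          if e ∈ F.edges then 1 else 0)
      = ∑ e : Sym2 V, if e ∈ F.edges then (if cross S e then 1 else 0) else 0 := by
        rw [Finset.sum_filter]
        refine Finset.sum_congr rfl fun e _ => ?_
        by_cases h1 : cross S e <;> by_cases h2 : e ∈ F.edges <;> simp [h1, h2]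
    _ = ∑ i ∈ F.edges, if cross S i then 1 else 0 := by
        rw [← Finset.sum_filter, Finset.filter_univ_mem]


/-- sandwich inequality for the cut sizes. -/
theorem cut_sandwich
    (I : Finset (Inst V)) (S : Finset V) (m : ℕ) (hm : 0 < m)
    (hS : S.Nonempty) (hS' : Sᶜ.Nonempty)
    (hcard : ∀ F ∈ I, F.edges.card = m)
    (hconn : ∀ F ∈ I, connectedInst F) :
    (1 / (m : ℝ)) * (cutW I S : ℝ) ≤ (cutH I S : ℝ) ∧
      (cutH I S : ℝ) ≤ (cutW I S : ℝ) := by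
  have key : cutW I S = ∑ F ∈ I, (F.edges.filter fun e => cross S e).card := cutW_eq I S
  have h1 : cutH I S ≤ cutW I S := by
    rw [key]
    unfold cutH
    rw [Finset.card_filter]
    refine Finset.sum_le_sum fun F hF => ?_
    split_ifs with h
    · obtain ⟨e, he, hce⟩ := exists_cross_edge (hconn F hF) h
      exact Finset.card_pos.mpr ⟨e, Finset.mem_filter.mpr ⟨he, hce⟩⟩
    · exact Nat.zero_le _
  have h2 : cutW I S ≤ m * cutH I S := by
    rw [key]
    unfold cutH
    rw [Finset.card_filter, Finset.mul_sum]
    refine Finset.sum_le_sum fun F hF => ?_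
    split_ifs with h
    · calc (F.edges.filter fun e => cross S e).card ≤ F.edges.card :=
            Finset.card_filter_le _ _
        _ = m * 1 := by rw [hcard F hF, mul_one]
    · have : (F.edges.filter fun e => cross S e) = ∅ := by
        rw [Finset.filter_eq_empty_iff]
        intro e he hce
        obtain ⟨⟨x, hx, hxS⟩, ⟨y, hy, hyS⟩⟩ := hce
        exact h ⟨⟨x, (hconn F hF).2.1 e he x hx, hxS⟩,
          ⟨y, (hconn F hF).2.1 e he y hy, hyS⟩⟩
      simp [this]
  constructor
  · rw [div_mul_eq_mul_div, one_mul, div_le_iff₀ (by positivity), mul_comm]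
    exact_mod_cast h2
  · exact_mod_cast h1
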